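/- arXiv:2311.03844 — 2 statements merged into one kernel-verified Lean document; each statement's English description precedes it below -/
import Mathlib

section
/- For A ∈ ℝ_max^{n×n}, when the characteristic polynomial χ_A(t) = det(A ⊕ t⊗I_n) is expanded as χ_A(t) = ⊕_{k=0}^{n} c_k ⊗ t^{⊗(n−k)}, the coefficient c_k equals the maximum weight of multi-circuits in 𝒢(A) of length k (with c_0 = 0 corresponding to the empty multi-circuit, and c_k = ε if no multi-circuit of length k exists). -/
open BigOperators

/-- The max-plus semiring `ℝ_max = ℝ ∪ {ε}`, `ε = -∞`, realized as `WithBot ℝ`.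
Here `⊔` (i.e. `max`) is the max-plus addition `⊕` and `+` is the
max-plus multiplication `⊗` (with `⊥ + x = ⊥`). -/
abbrev Rmax : Type := WithBot ℝ

namespace MaxPlus

noncomputable section

/-- Max-plus matrix product `A ⊗ B`. -/
def mul {l m k : ℕ} (A : Matrix (Fin l) (Fin m) Rmax) (B : Matrix (Fin m) (Fin k) Rmax) :
    Matrix (Fin l) (Fin k) Rmax :=
  fun i j => Finset.univ.sup fun s => A i s + B s j

/-- Max-plus identity matrix `I_n` (`0` on the diagonal, `ε` off the diagonal). -/
def one (n : ℕ) : Matrix (Fin n) (Fin n) Rmax :=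
  fun i j => if i = j then (0 : Rmax) else ⊥

/-- Max-plus matrix power `A^{⊗t}`. -/
def pow {n : ℕ} (A : Matrix (Fin n) (Fin n) Rmax) : ℕ → Matrix (Fin n) (Fin n) Rmax
  | 0 => one n
  | t + 1 => mul (pow A t) A

variable {n : ℕ}

/-- `p` is a walk (path) of length `t` in the digraph `𝒢(A)`:
consecutive nodes are joined by arcs (finite entries of `A`). -/
def IsWalk (A : Matrix (Fin n) (Fin n) Rmax) (t : ℕ) (p : ℕ → Fin n) : Prop :=
  ∀ k, k < t → A (p k) (p (k + 1)) ≠ ⊥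

/-- The weight of a walk: the sum of its arc weights. -/
def weight (A : Matrix (Fin n) (Fin n) Rmax) (t : ℕ) (p : ℕ → Fin n) : Rmax :=
  ∑ k ∈ Finset.range t, A (p k) (p (k + 1))

/-- `p` is a circuit of length `t` in `𝒢(A)`. -/
def IsCircuit (A : Matrix (Fin n) (Fin n) Rmax) (t : ℕ) (p : ℕ → Fin n) : Prop :=
  0 < t ∧ IsWalk A t p ∧ p t = p 0

/-- Elementary circuit: no repeated node among `p 0, …, p (t-1)`. -/
def IsElemCircuit (A : Matrix (Fin n) (Fin n) Rmax) (t : ℕ) (p : ℕ → Fin n) : Prop :=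
  IsCircuit A t p ∧ ∀ k, k < t → ∀ l, l < t → p k = p l → k = l

/-- Mean weight `w(𝒞)/ℓ(𝒞)` of a circuit, as a real number
(the weight of a genuine circuit is never `⊥`). -/
def mean (A : Matrix (Fin n) (Fin n) Rmax) (t : ℕ) (p : ℕ → Fin n) : ℝ :=
  (weight A t p).unbotD 0 / (t : ℝ)

/-- `x` is an eigenvector of `A` for the eigenvalue `lam`:
`x` is not identically `ε` and `A ⊗ x = lam ⊗ x`. -/
def IsEigenpair (A : Matrix (Fin n) (Fin n) Rmax) (lam : Rmax) (x : Fin n → Rmax) : Prop :=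
  (∃ i, x i ≠ ⊥) ∧ ∀ i, (Finset.univ.sup fun k => A i k + x k) = lam + x i

/-- `lam` is an eigenvalue of `A`. -/
def IsEigenvalue (A : Matrix (Fin n) (Fin n) Rmax) (lam : Rmax) : Prop :=
  ∃ x, IsEigenpair A lam x

/-- `μ = λ(A)`: the maximum mean weight over all circuits of `𝒢(A)`. -/
def IsMaxCircuitMean (A : Matrix (Fin n) (Fin n) Rmax) (μ : ℝ) : Prop :=
  (∃ t p, IsCircuit A t p ∧ mean A t p = μ) ∧ ∀ t p, IsCircuit A t p → mean A t p ≤ μ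

/-- Kleene star `A* = I_n ⊕ A ⊕ A^{⊗2} ⊕ ⋯ ⊕ A^{⊗(n-1)}`. -/
def star (A : Matrix (Fin n) (Fin n) Rmax) : Matrix (Fin n) (Fin n) Rmax :=
  fun i j => (Finset.range n).sup fun k => pow A k i j

/-- Partial sum `I_n ⊕ A ⊕ ⋯ ⊕ A^{⊗m}` of the Kleene star. -/
def starUpTo (A : Matrix (Fin n) (Fin n) Rmax) (m : ℕ) : Matrix (Fin n) (Fin n) Rmax :=
  fun i j => (Finset.range (m + 1)).sup fun k => pow A k i j

/-- Max-plus determinant `det A = ⊕_{π ∈ S_n} ⊗_i a_{iπ(i)}`. -/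
def det (A : Matrix (Fin n) (Fin n) Rmax) : Rmax :=
  Finset.univ.sup fun π : Equiv.Perm (Fin n) => ∑ i, A i (π i)

/-- Max-plus characteristic polynomial `χ_A(t) = det (A ⊕ t ⊗ I_n)`. -/
def charPoly (A : Matrix (Fin n) (Fin n) Rmax) (t : Rmax) : Rmax :=
  det fun i j => A i j ⊔ (if i = j then t else ⊥)

/-- Max-plus diagonal matrix `diag(d)` defined by a finite vector `d`. -/
def diagM (d : Fin n → ℝ) : Matrix (Fin n) (Fin n) Rmax :=
  fun i j => if i = j then ((d i : ℝ) : Rmax) else ⊥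

/-- `A` is irreducible: `𝒢(A)` is strongly connected. -/
def Irreducible (A : Matrix (Fin n) (Fin n) Rmax) : Prop :=
  ∀ i j : Fin n, ∃ t p, 0 < t ∧ IsWalk A t p ∧ p 0 = i ∧ p t = j

/-- `v` is a critical node of `A` (with `lamA = λ(A)`): it lies on a circuit
of mean weight `λ(A)`. -/
def IsCriticalNode (A : Matrix (Fin n) (Fin n) Rmax) (lamA : ℝ) (v : Fin n) : Prop :=
  ∃ t p, IsCircuit A t p ∧ mean A t p = lamA ∧ ∃ m, m < t ∧ p m = v

/-- `(i,j)` is a critical arc of `A` (with `lamA = λ(A)`). -/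
def IsCriticalArc (A : Matrix (Fin n) (Fin n) Rmax) (lamA : ℝ) (i j : Fin n) : Prop :=
  ∃ t p, IsCircuit A t p ∧ mean A t p = lamA ∧ ∃ m, m < t ∧ p m = i ∧ p (m + 1) = j

/-- A multi-circuit: a collection of pairwise node-disjoint elementary circuits,
each given by its length and its node sequence. -/
def IsMultiCircuit (A : Matrix (Fin n) (Fin n) Rmax) (L : List (ℕ × (ℕ → Fin n))) : Prop :=
  (∀ c ∈ L, IsElemCircuit A c.1 c.2) ∧
  L.Pairwise fun c d => ∀ k, k < c.1 → ∀ l, l < d.1 → c.2 k ≠ d.2 l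

/-- Length of a multi-circuit: the sum of the lengths of its circuits. -/
def mcLength {n : ℕ} (L : List (ℕ × (ℕ → Fin n))) : ℕ := (L.map Prod.fst).sum

/-- Weight of a multi-circuit: the sum of the weights of its circuits. -/
def mcWeight (A : Matrix (Fin n) (Fin n) Rmax) (L : List (ℕ × (ℕ → Fin n))) : Rmax :=
  (L.map fun c => weight A c.1 c.2).sum

/-- The value `w(𝔊) + λ·(n − ℓ(𝔊))` of a multi-circuit `𝔊`. -/
def mcVal (A : Matrix (Fin n) (Fin n) Rmax) (lam : ℝ)
    (L : List (ℕ × (ℕ → Fin n))) : Rmax :=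
  mcWeight A L + ((((n : ℝ) - (mcLength L : ℝ)) * lam : ℝ) : Rmax)

/-- `L` is a `λ`-maximal multi-circuit (λ-MMC): `χ_A(λ) = w(L) + λ·(n − ℓ(L))`. -/
def IsMMC (A : Matrix (Fin n) (Fin n) Rmax) (lam : ℝ) (L : List (ℕ × (ℕ → Fin n))) : Prop :=
  IsMultiCircuit A L ∧ charPoly A ((lam : ℝ) : Rmax) = mcVal A lam L

/-- `v` is the maximum weight of multi-circuits of length `k` in `𝒢(A)`
(`v = ⊥ = ε` if there is no multi-circuit of length `k`). -/
def IsMaxMCWeight (A : Matrix (Fin n) (Fin n) Rmax) (k : ℕ) (v : Rmax) : Prop :=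
  (∀ L, IsMultiCircuit A L → mcLength L = k → mcWeight A L ≤ v) ∧
  (v = ⊥ ∨ ∃ L, IsMultiCircuit A L ∧ mcLength L = k ∧ mcWeight A L = v)

/-- `rs` is a list of the `n` roots of `χ_A`, via the factorization of `χ_A`
into linear factors (the leading coefficient of `χ_A` is `0 = e`). -/
def IsCharRoots (A : Matrix (Fin n) (Fin n) Rmax) (rs : Fin n → Rmax) : Prop :=
  ∀ t, charPoly A t = ∑ i, (t ⊔ rs i)

/-- `lam 1 > lam 2 > ⋯ > lam p` are exactly the finite roots among `rs`,
in descending order. -/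
def IsFiniteRootSeq {n : ℕ} (rs : Fin n → Rmax) (p : ℕ) (lam : ℕ → ℝ) : Prop :=
  (∀ k, 1 ≤ k → k < p → lam (k + 1) < lam k) ∧
  (∀ k, 1 ≤ k → k ≤ p → ∃ i, rs i = ((lam k : ℝ) : Rmax)) ∧
  (∀ i, rs i = ⊥ ∨ ∃ k, 1 ≤ k ∧ k ≤ p ∧ rs i = ((lam k : ℝ) : Rmax))

/-- `G 0, G 1, …, G p` is a maximal multi-circuit sequence (MMCS) of `A`:
`G 0 = ∅` and `G k` is a `λ`-MMC for all `λ` with `λ_{k+1} ≤ λ ≤ λ_k`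
(where `λ_0 = +∞` and `λ_{p+1} = ε`). -/
def IsMMCS (A : Matrix (Fin n) (Fin n) Rmax) (p : ℕ) (lam : ℕ → ℝ)
    (G : ℕ → List (ℕ × (ℕ → Fin n))) : Prop :=
  G 0 = [] ∧
  ∀ k, k ≤ p → ∀ x : ℝ, (k < p → lam (k + 1) ≤ x) → (1 ≤ k → x ≤ lam k) → IsMMC A x (G k)

/-- The set of nodes of a circuit. -/
def circNodes (t : ℕ) (p : ℕ → Fin n) : Finset (Fin n) := (Finset.range t).image p

/-- A group produced by Algorithm 1: its node set `nodes`, its quasi-critical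
circuit `(ct, cp)`, and the index `k = k(s)` with `(ct, cp) ∈ 𝔊_{k(s)}`. -/
structure Grp (n : ℕ) where
  nodes : Finset (Fin n)
  ct : ℕ
  cp : ℕ → Fin n
  k : ℕ

/-- The union of the node sets of a list of groups. -/
def unionNodes (st : List (Grp n)) : Finset (Fin n) :=
  st.foldr (fun g acc => g.nodes ∪ acc) ∅

/-- One step of Algorithm 1, processing one circuit `c = (k, t, p)`;
the groups created so far are kept in reverse creation order. -/
def algStep (st : List (Grp n)) (c : ℕ × ℕ × (ℕ → Fin n)) : List (Grp n) :=
  let S := circNodes c.2.1 c.2.2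
  if (S ∩ unionNodes st).Nonempty then
    match st with
    | [] => []
    | g :: rest => { g with nodes := g.nodes ∪ (S \ unionNodes st) } :: rest
  else
    ⟨S, c.2.1, c.2.2, c.1⟩ :: st

/-- Algorithm 1: process the circuits of `G 1`, then `G 2`, …, then `G p` in
order, and finally add all never-covered nodes to the last created group.
The result is the list of groups `N_1, …, N_r` in creation order. -/
def algPartition (p : ℕ) (G : ℕ → List (ℕ × (ℕ → Fin n))) : List (Grp n) :=
  let items : List (ℕ × ℕ × (ℕ → Fin n)) :=
    (List.range p).foldr (fun k acc => ((G (k + 1)).map fun c => (k + 1, c.1, c.2)) ++ acc) []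
  let st := items.foldl algStep []
  match st with
  | [] => []
  | g :: rest =>
      (({ g with nodes := g.nodes ∪ (Finset.univ \ unionNodes (g :: rest)) } : Grp n)
        :: rest).reverse

/-- `U_s = N_1 ∪ ⋯ ∪ N_s` (`s` counted 1-based, i.e. the first `s` groups). -/
def Useq (Gs : List (Grp n)) (s : ℕ) : Finset (Fin n) := unionNodes (Gs.take s)

/-- The walk `P` (of length `t`) contains the circuit `(ct, cp)` as a
consecutive subpath. -/
def ContainsCircuit (t : ℕ) (P : ℕ → Fin n) (ct : ℕ) (cp : ℕ → Fin n) : Prop :=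
  ∃ m, m + ct ≤ t ∧ ∀ j, j ≤ ct → P (m + j) = cp j

end

end MaxPlus


namespace MCAux
open Finset

lemma sup_add_right {ι : Type*} (s : Finset ι) (f : ι → WithBot ℝ) (x : WithBot ℝ) :
    s.sup f + x = s.sup fun i => f i + x := by
  induction s using Finset.cons_induction with
  | empty => simp
  | cons a s ha ih =>
      rw [sup_cons, sup_cons, ← ih, max_add_add_right]

lemma add_sup_left {ι : Type*} (s : Finset ι) (f : ι → WithBot ℝ) (x : WithBot ℝ) :
    x + s.sup f = s.sup fun i => x + f i := by
  induction s using Finset.cons_induction with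
  | empty => simp
  | cons a s ha ih =>
      rw [sup_cons, sup_cons, ← ih, max_add_add_left]

lemma sum_bot {ι : Type*} [DecidableEq ι] (s : Finset ι) (f : ι → WithBot ℝ) (i : ι) (hi : i ∈ s)
    (h : f i = ⊥) : ∑ j ∈ s, f j = ⊥ := by
  rw [← Finset.add_sum_erase s f hi, h, WithBot.bot_add]

lemma sum_sup_expand {ι : Type*} [DecidableEq ι] (s : Finset ι) (f g : ι → WithBot ℝ) :
    ∑ i ∈ s, (f i ⊔ g i) = s.powerset.sup fun S => (∑ i ∈ S, f i) + ∑ i ∈ s \ S, g i := by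
  induction s using Finset.induction_on with
  | empty => simp
  | insert a s ha ih =>
      rw [Finset.sum_insert ha, ih, Finset.powerset_insert, Finset.sup_union,
        Finset.sup_image]
      rw [← max_add_add_right, add_sup_left, add_sup_left]
      have h1 : ∀ S ∈ s.powerset,
          (∑ i ∈ S, f i) + ∑ i ∈ insert a s \ S, g i
            = g a + ((∑ i ∈ S, f i) + ∑ i ∈ s \ S, g i) := by
        intro S hS
        have hSs : S ⊆ s := Finset.mem_powerset.1 hS
        have haS : a ∉ S := fun h => ha (hSs h)
        rw [Finset.insert_sdiff_of_notMem _ haS, Finset.sum_insert (by simp [ha])]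
        abel
      have h2 : ∀ S ∈ s.powerset,
          ((fun S => (∑ i ∈ S, f i) + ∑ i ∈ insert a s \ S, g i) ∘ insert a) S
            = f a + ((∑ i ∈ S, f i) + ∑ i ∈ s \ S, g i) := by
        intro S hS
        have hSs : S ⊆ s := Finset.mem_powerset.1 hS
        have haS : a ∉ S := fun h => ha (hSs h)
        have hset : insert a s \ insert a S = s \ S := by
          ext x
          simp only [Finset.mem_sdiff, Finset.mem_insert, not_or]
          constructor
          · rintro ⟨(rfl | hx), h2, h3⟩
            · exact absurd rfl h2
            · exact ⟨hx, h3⟩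
          · rintro ⟨hx, h3⟩
            exact ⟨Or.inr hx, fun e => ha (e ▸ hx), h3⟩
        simp only [Function.comp_apply, hset, Finset.sum_insert haS, add_assoc]
      rw [Finset.sup_congr rfl h1, Finset.sup_congr rfl h2, max_comm]

open MaxPlus in
lemma charPoly_eq {n : ℕ} (A : Matrix (Fin n) (Fin n) Rmax) (t : Rmax) :
    charPoly A t = Finset.univ.sup fun π : Equiv.Perm (Fin n) =>
      (Finset.univ : Finset (Fin n)).powerset.sup fun S =>
        (∑ i ∈ S, A i (π i)) + ∑ i ∈ Finset.univ \ S, (if i = π i then t else ⊥) := by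
  unfold MaxPlus.charPoly MaxPlus.det
  refine Finset.sup_congr rfl fun π _ => ?_
  exact sum_sup_expand Finset.univ (fun i => A i (π i)) (fun i => if i = π i then t else ⊥)

open MaxPlus in
lemma exists_mc_of_perm {n : ℕ} (A : Matrix (Fin n) (Fin n) Rmax) (π : Equiv.Perm (Fin n))
    (S : Finset (Fin n)) (hS : ∀ i ∈ S, π i ∈ S) (hA : ∀ i ∈ S, A i (π i) ≠ ⊥) :
    ∃ L, IsMultiCircuit A L ∧ mcLength L = S.card ∧
      mcWeight A L = ∑ i ∈ S, A i (π i) ∧ ∀ c ∈ L, ∀ k < c.1, c.2 k ∈ S := by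
  induction S using Finset.strongInduction with
  | _ S ih =>
  rcases S.eq_empty_or_nonempty with rfl | ⟨a, haS⟩
  · exact ⟨[], ⟨by simp, List.Pairwise.nil⟩, by simp [mcLength], by simp [mcWeight], by simp⟩
  · -- the orbit of `a`
    set p : ℕ → Fin n := fun k => (π ^ k) a with hp
    have hstep : ∀ k, p (k + 1) = π (p k) := by
      intro k; simp [hp, pow_succ', Equiv.Perm.mul_apply]
    have hpS : ∀ k, p k ∈ S := by
      intro k; induction k with
      | zero => simpa [hp] using haS
      | succ k ihk => rw [hstep]; exact hS _ ihk
    have hex : ∃ m, 0 < m ∧ (π ^ m) a = a := by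
      refine ⟨orderOf π, ?_, ?_⟩
      · exact orderOf_pos π
      · rw [pow_orderOf_eq_one]; rfl
    set t0 := Nat.find hex with ht0def
    obtain ⟨ht0pos, ht0fix⟩ : 0 < t0 ∧ (π ^ t0) a = a := Nat.find_spec hex
    have hmin : ∀ m, m < t0 → ¬(0 < m ∧ (π ^ m) a = a) := fun m hm => Nat.find_min hex hm
    have hinj : ∀ k < t0, ∀ l < t0, p k = p l → k = l := by
      have key : ∀ k l, k < l → l < t0 → p k ≠ p l := by
        intro k l hkl hl h
        have hcomm : (π ^ k) * (π ^ (l - k)) = π ^ l := by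
          rw [← pow_add]; congr 1; omega
        have e1 : (π ^ k) ((π ^ (l - k)) a) = (π ^ k) a := by
          calc (π ^ k) ((π ^ (l - k)) a) = ((π ^ k) * (π ^ (l - k))) a := rfl
            _ = (π ^ l) a := by rw [hcomm]
            _ = (π ^ k) a := h.symm
        have e2 : (π ^ (l - k)) a = a := (π ^ k).injective e1
        exact hmin (l - k) (by omega) ⟨by omega, e2⟩
      intro k hk l hl h
      rcases lt_trichotomy k l with h' | h' | h'
      · exact absurd h (key k l h' hl)
      · exact h'
      · exact absurd h.symm (key l k h' hk)
    set O : Finset (Fin n) := (Finset.range t0).image p with hO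
    have hOsub : O ⊆ S := by
      intro x hx; rw [hO, Finset.mem_image] at hx
      obtain ⟨k, _, rfl⟩ := hx; exact hpS k
    have hcardO : O.card = t0 := by
      rw [hO, Finset.card_image_of_injOn, Finset.card_range]
      intro k hk l hl h
      exact hinj k (Finset.mem_range.1 hk) l (Finset.mem_range.1 hl) h
    have haO : a ∈ O := by
      rw [hO, Finset.mem_image]
      exact ⟨0, Finset.mem_range.2 ht0pos, rfl⟩
    have hcirc : IsElemCircuit A t0 p := by
      refine ⟨⟨ht0pos, ?_, ?_⟩, hinj⟩
      · intro k hk; rw [hstep]; exact hA _ (hpS k)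
      · exact ht0fix.trans rfl
    have hπO : ∀ i ∈ O, π i ∈ O := by
      intro i hi; rw [hO, Finset.mem_image] at hi ⊢
      obtain ⟨k, hk, rfl⟩ := hi
      rw [Finset.mem_range] at hk
      rcases Nat.lt_or_ge (k + 1) t0 with h' | h'
      · exact ⟨k + 1, Finset.mem_range.2 h', hstep k⟩
      · have : k + 1 = t0 := by omega
        refine ⟨0, Finset.mem_range.2 ht0pos, ?_⟩
        rw [← hstep k, this]
        exact ht0fix.symm
    have hcompl : ∀ i ∈ S \ O, π i ∈ S \ O := by
      intro i hi
      rw [Finset.mem_sdiff] at hi ⊢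
      refine ⟨hS i hi.1, fun hmem => hi.2 ?_⟩
      rw [hO, Finset.mem_image] at hmem
      obtain ⟨k, hk, hkeq⟩ := hmem
      rw [Finset.mem_range] at hk
      rcases Nat.eq_zero_or_pos k with rfl | hkpos
      · have : π (p (t0 - 1)) = π i := by
          rw [← hstep (t0 - 1)]
          have : t0 - 1 + 1 = t0 := by omega
          rw [this]
          exact ht0fix.trans hkeq
        have := π.injective this
        rw [hO, Finset.mem_image]
        exact ⟨t0 - 1, Finset.mem_range.2 (by omega), this⟩
      · have : π (p (k - 1)) = π i := by
          rw [← hstep (k - 1)]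
          have e : k - 1 + 1 = k := by omega
          rw [e, hkeq]
        have := π.injective this
        rw [hO, Finset.mem_image]
        exact ⟨k - 1, Finset.mem_range.2 (by omega), this⟩
    have hweight : weight A t0 p = ∑ i ∈ O, A i (π i) := by
      rw [hO, Finset.sum_image (fun k hk l hl h =>
        hinj k (Finset.mem_range.1 hk) l (Finset.mem_range.1 hl) h)]
      unfold MaxPlus.weight
      exact Finset.sum_congr rfl fun k _ => by rw [hstep]
    have hss : S \ O ⊂ S := Finset.sdiff_ssubset hOsub ⟨a, haO⟩
    obtain ⟨L', hL'mc, hL'len, hL'w, hL'nodes⟩ :=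
      ih (S \ O) hss hcompl (fun i hi => hA i (Finset.mem_sdiff.1 hi).1)
    refine ⟨(t0, p) :: L', ⟨?_, ?_⟩, ?_, ?_, ?_⟩
    · intro c hc
      rcases List.mem_cons.1 hc with rfl | hc
      · exact hcirc
      · exact hL'mc.1 c hc
    · refine List.Pairwise.cons ?_ hL'mc.2
      intro d hd k hk l hl h
      have h1 : p k ∈ O := by
        rw [hO, Finset.mem_image]; exact ⟨k, Finset.mem_range.2 hk, rfl⟩
      have h2 : d.2 l ∈ S \ O := hL'nodes d hd l hl
      have h' : p k = d.2 l := h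
      rw [h'] at h1
      exact (Finset.mem_sdiff.1 h2).2 h1
    · have : (S \ O).card = S.card - t0 := by
        rw [Finset.card_sdiff_of_subset hOsub, hcardO]
      have hle : t0 ≤ S.card := hcardO ▸ Finset.card_le_card hOsub
      simp only [mcLength, List.map_cons, List.sum_cons] at hL'len ⊢
      omega
    · have hsplit : ∑ i ∈ S \ O, A i (π i) + ∑ i ∈ O, A i (π i) = ∑ i ∈ S, A i (π i) :=
        Finset.sum_sdiff hOsub
      simp only [mcWeight, List.map_cons, List.sum_cons] at hL'w ⊢
      rw [hL'w, hweight, ← hsplit, add_comm]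
    · intro c hc k hk
      rcases List.mem_cons.1 hc with rfl | hc
      · exact hpS k
      · exact (Finset.mem_sdiff.1 (hL'nodes c hc k hk)).1

open MaxPlus in
/-- The node list of a circuit. -/
def circList {n : ℕ} (c : ℕ × (ℕ → Fin n)) : List (Fin n) := (List.range c.1).map c.2

open MaxPlus in
noncomputable def mcPerm {n : ℕ} (L : List (ℕ × (ℕ → Fin n))) : Equiv.Perm (Fin n) :=
  (L.map fun c => (circList c).formPerm).prod

open MaxPlus

lemma mem_circList {n : ℕ} {c : ℕ × (ℕ → Fin n)} {x : Fin n} :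
    x ∈ circList c ↔ ∃ k, k < c.1 ∧ c.2 k = x := by
  simp [circList, List.mem_map, List.mem_range]

lemma circList_nodup {n : ℕ} {A : Matrix (Fin n) (Fin n) Rmax} {c : ℕ × (ℕ → Fin n)}
    (hc : IsElemCircuit A c.1 c.2) : (circList c).Nodup := by
  refine List.Nodup.map_on ?_ List.nodup_range
  intro k hk l hl h
  exact hc.2 k (List.mem_range.1 hk) l (List.mem_range.1 hl) h

lemma formPerm_circ {n : ℕ} {A : Matrix (Fin n) (Fin n) Rmax} {c : ℕ × (ℕ → Fin n)}
    (hc : IsElemCircuit A c.1 c.2) {k : ℕ} (hk : k < c.1) :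
    (circList c).formPerm (c.2 k) = c.2 (k + 1) := by
  have hlen : (circList c).length = c.1 := by simp [circList]
  have hget : ∀ i (hi : i < (circList c).length), (circList c)[i] = c.2 i := by
    intro i hi; simp [circList]
  have hk' : k < (circList c).length := by omega
  rw [← hget k hk', List.formPerm_apply_getElem _ (circList_nodup hc) k hk', hget]
  rw [hlen]
  rcases Nat.lt_or_ge (k + 1) c.1 with h | h
  · rw [Nat.mod_eq_of_lt h]
  · have : k + 1 = c.1 := by omega
    rw [this, Nat.mod_self]
    exact hc.1.2.2.symm

lemma mcPerm_not_mem {n : ℕ} (L : List (ℕ × (ℕ → Fin n))) (x : Fin n)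
    (h : ∀ c ∈ L, x ∉ circList c) : mcPerm L x = x := by
  induction L with
  | nil => rfl
  | cons d L ih =>
      have : mcPerm (d :: L) x = (circList d).formPerm (mcPerm L x) := rfl
      rw [this, ih fun c hc => h c (List.mem_cons_of_mem d hc),
        List.formPerm_apply_of_notMem (h d (List.mem_cons_self))]

lemma mcPerm_mem {n : ℕ} {A : Matrix (Fin n) (Fin n) Rmax} (L : List (ℕ × (ℕ → Fin n)))
    (hL : IsMultiCircuit A L) (c : ℕ × (ℕ → Fin n)) (hc : c ∈ L) (x : Fin n)
    (hx : x ∈ circList c) : mcPerm L x = (circList c).formPerm x := by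
  induction L with
  | nil => cases hc
  | cons d L ih =>
      have hML' : IsMultiCircuit A L :=
        ⟨fun e he => hL.1 e (List.mem_cons_of_mem d he), hL.2.of_cons⟩
      have hdisj : ∀ e ∈ L, ∀ k, k < d.1 → ∀ l, l < e.1 → d.2 k ≠ e.2 l :=
        fun e he => List.rel_of_pairwise_cons hL.2 he
      have happ : mcPerm (d :: L) x = (circList d).formPerm (mcPerm L x) := rfl
      rcases List.mem_cons.1 hc with rfl | hc'
      · have hnot : ∀ e ∈ L, x ∉ circList e := by
          intro e he hxe
          obtain ⟨k, hk, rfl⟩ := mem_circList.1 hx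
          obtain ⟨l, hl, hle⟩ := mem_circList.1 hxe
          exact hdisj e he k hk l hl hle.symm
        rw [happ, mcPerm_not_mem L x hnot]
      · have hxd : x ∉ circList d := by
          intro hxd
          obtain ⟨k, hk, hke⟩ := mem_circList.1 hxd
          obtain ⟨l, hl, rfl⟩ := mem_circList.1 hx
          exact hdisj c hc' k hk l hl hke
        rw [happ, ih hML' hc']
        have hmem : (circList c).formPerm x ∈ circList c :=
          List.formPerm_apply_mem_of_mem hx
        have : (circList c).formPerm x ∉ circList d := by
          intro hmm
          obtain ⟨k, hk, hke⟩ := mem_circList.1 hmm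
          obtain ⟨l, hl, hle⟩ := mem_circList.1 hmem
          exact hdisj c hc' k hk l hl (hke.trans hle.symm)
        exact List.formPerm_apply_of_notMem this

lemma perm_of_mc {n : ℕ} (A : Matrix (Fin n) (Fin n) Rmax) (L : List (ℕ × (ℕ → Fin n)))
    (hL : IsMultiCircuit A L) :
    ∃ (π : Equiv.Perm (Fin n)) (S : Finset (Fin n)),
      S.card = mcLength L ∧ (∑ i ∈ S, A i (π i)) = mcWeight A L ∧ ∀ i ∉ S, π i = i := by
  suffices h : ∃ S : Finset (Fin n), S.card = mcLength L ∧
      (∀ x, x ∈ S ↔ ∃ c ∈ L, x ∈ circList c) ∧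
      (∑ i ∈ S, A i (mcPerm L i)) = mcWeight A L by
    obtain ⟨S, h1, h2, h3⟩ := h
    refine ⟨mcPerm L, S, h1, h3, fun i hi => ?_⟩
    exact mcPerm_not_mem L i fun c hc hxc => hi ((h2 i).2 ⟨c, hc, hxc⟩)
  induction L with
  | nil => exact ⟨∅, by simp [mcLength], by simp, by simp [mcWeight]⟩
  | cons d L ih =>
      have hML' : IsMultiCircuit A L :=
        ⟨fun e he => hL.1 e (List.mem_cons_of_mem d he), hL.2.of_cons⟩
      have hdisj : ∀ e ∈ L, ∀ k, k < d.1 → ∀ l, l < e.1 → d.2 k ≠ e.2 l :=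
        fun e he => List.rel_of_pairwise_cons hL.2 he
      obtain ⟨S', h1, h2, h3⟩ := ih hML'
      have hd : IsElemCircuit A d.1 d.2 := hL.1 d (List.mem_cons_self)
      set O : Finset (Fin n) := (circList d).toFinset with hOdef
      have hmemO : ∀ x, x ∈ O ↔ x ∈ circList d := fun x => List.mem_toFinset
      have hOS' : Disjoint O S' := by
        rw [Finset.disjoint_left]
        intro x hxO hxS'
        obtain ⟨c, hcL, hxc⟩ := (h2 x).1 hxS'
        obtain ⟨k, hk, hke⟩ := mem_circList.1 ((hmemO x).1 hxO)
        obtain ⟨l, hl, hle⟩ := mem_circList.1 hxc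
        exact hdisj c hcL k hk l hl (hke.trans hle.symm)
      have hcardO : O.card = d.1 := by
        rw [hOdef, List.toFinset_card_of_nodup (circList_nodup hd)]
        simp [circList]
      refine ⟨O ∪ S', ?_, ?_, ?_⟩
      · rw [Finset.card_union_of_disjoint hOS', hcardO, h1]
        simp [mcLength]
      · intro x
        simp only [Finset.mem_union, hmemO, h2, List.mem_cons]
        constructor
        · rintro (h | ⟨c, hc, hxc⟩)
          · exact ⟨d, Or.inl rfl, h⟩
          · exact ⟨c, Or.inr hc, hxc⟩
        · rintro ⟨c, (rfl | hc), hxc⟩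
          · exact Or.inl hxc
          · exact Or.inr ⟨c, hc, hxc⟩
      · rw [Finset.sum_union hOS']
        have hsum1 : ∑ i ∈ O, A i (mcPerm (d :: L) i) = weight A d.1 d.2 := by
          have hOimg : O = (Finset.range d.1).image d.2 := by
            ext x
            rw [hmemO, mem_circList]
            simp [Finset.mem_image, Finset.mem_range]
          rw [hOimg, Finset.sum_image (fun k hk l hl h =>
            hd.2 k (Finset.mem_range.1 hk) l (Finset.mem_range.1 hl) h)]
          unfold MaxPlus.weight
          refine Finset.sum_congr rfl fun k hk => ?_
          rw [mcPerm_mem (d :: L) hL d (List.mem_cons_self) (d.2 k)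
            (mem_circList.2 ⟨k, Finset.mem_range.1 hk, rfl⟩),
            formPerm_circ hd (Finset.mem_range.1 hk)]
        have hsum2 : ∑ i ∈ S', A i (mcPerm (d :: L) i) = mcWeight A L := by
          rw [← h3]
          refine Finset.sum_congr rfl fun x hx => ?_
          obtain ⟨c, hcL, hxc⟩ := (h2 x).1 hx
          rw [mcPerm_mem (d :: L) hL c (List.mem_cons_of_mem d hcL) x hxc,
            mcPerm_mem L hML' c hcL x hxc]
        rw [hsum1, hsum2]
        simp [mcWeight]

end MCAux


open MaxPlus in
/-- When `χ_A(t) = det(A ⊕ t ⊗ I_n)` is expanded as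
`χ_A(t) = ⊕_{k=0}^n c_k ⊗ t^{⊗(n−k)}`, the coefficient `c_k` equals the maximum
weight of multi-circuits of length `k` in `𝒢(A)` (with `c_0 = 0` for the empty
multi-circuit, and `c_k = ε` if no multi-circuit of length `k` exists). -/
theorem charPoly_coefficients_are_max_multicircuit_weights {n : ℕ}
    (A : Matrix (Fin n) (Fin n) Rmax) (c : ℕ → Rmax)
    (hc : ∀ k ≤ n, IsMaxMCWeight A k (c k)) :
    c 0 = 0 ∧
      ∀ t : Rmax, charPoly A t = (Finset.range (n + 1)).sup fun k => c k + (n - k) • t := by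
  classical
  constructor
  · obtain ⟨hub, hcase⟩ := hc 0 (Nat.zero_le n)
    have h0 : (0 : Rmax) ≤ c 0 := by
      have := hub [] ⟨by simp, List.Pairwise.nil⟩ (by simp [MaxPlus.mcLength])
      simpa [MaxPlus.mcWeight] using this
    rcases hcase with hbot | ⟨L, hLmc, hLlen, hLw⟩
    · rw [hbot] at h0; exact absurd h0 (by simp)
    · have hnil : L = [] := by
        cases L with
        | nil => rfl
        | cons d L' =>
            have hd : 0 < d.1 := (hLmc.1 d (List.mem_cons_self)).1.1
            have he : mcLength (d :: L') = d.1 + mcLength L' := by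
              simp [MaxPlus.mcLength]
            omega
      rw [hnil] at hLw
      simp only [MaxPlus.mcWeight, List.map_nil, List.sum_nil] at hLw
      exact hLw.symm
  · intro t
    rw [MCAux.charPoly_eq]
    apply le_antisymm
    · refine Finset.sup_le fun π _ => Finset.sup_le fun S hS => ?_
      by_cases hfix : ∀ i ∈ Finset.univ \ S, π i = i
      · have hsum2 : ∑ i ∈ Finset.univ \ S, (if i = π i then t else ⊥)
            = (n - S.card) • t := by
          rw [Finset.sum_congr rfl fun i hi => if_pos (hfix i hi).symm,
            Finset.sum_const, Finset.card_sdiff_of_subset (Finset.subset_univ S),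
            Finset.card_univ, Fintype.card_fin]
        by_cases hbot : ∃ i ∈ S, A i (π i) = ⊥
        · obtain ⟨i, hi, hib⟩ := hbot
          rw [MCAux.sum_bot S _ i hi hib, WithBot.bot_add]
          exact bot_le
        · push_neg at hbot
          have hScl : ∀ i ∈ S, π i ∈ S := by
            intro i hi
            by_contra hni
            have hmem : π i ∈ Finset.univ \ S := Finset.mem_sdiff.2 ⟨Finset.mem_univ _, hni⟩
            have h3 : π i = i := π.injective (hfix _ hmem)
            exact hni (by rw [h3]; exact hi)
          obtain ⟨L, hLmc, hLlen, hLw, -⟩ := MCAux.exists_mc_of_perm A π S hScl hbot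
          have hkn : S.card ≤ n := by
            simpa using Finset.card_le_univ S
          have h1 : ∑ i ∈ S, A i (π i) ≤ c S.card := hLw ▸ (hc S.card hkn).1 L hLmc hLlen
          calc (∑ i ∈ S, A i (π i)) + ∑ i ∈ Finset.univ \ S, (if i = π i then t else ⊥)
              ≤ c S.card + (n - S.card) • t := by
                rw [hsum2]; exact add_le_add_left h1 _
            _ ≤ _ := Finset.le_sup (f := fun k => c k + (n - k) • t)
                (Finset.mem_range.2 (Nat.lt_succ_of_le hkn))
      · push_neg at hfix
        obtain ⟨i, hi, hne⟩ := hfix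
        have hib : (if i = π i then t else (⊥ : Rmax)) = ⊥ := if_neg fun e => hne e.symm
        rw [MCAux.sum_bot (Finset.univ \ S) _ i hi hib, WithBot.add_bot]
        exact bot_le
    · refine Finset.sup_le fun k hk => ?_
      have hkn : k ≤ n := Nat.lt_succ_iff.1 (Finset.mem_range.1 hk)
      rcases (hc k hkn).2 with hbot | ⟨L, hLmc, hLlen, hLw⟩
      · rw [hbot, WithBot.bot_add]; exact bot_le
      · obtain ⟨π, S, hScard, hsum, hfix⟩ := MCAux.perm_of_mc A L hLmc
        have hterm : (∑ i ∈ S, A i (π i)) + ∑ i ∈ Finset.univ \ S, (if i = π i then t else ⊥)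
            = c k + (n - k) • t := by
          congr 1
          · rw [hsum, hLw]
          · rw [Finset.sum_congr rfl fun i hi =>
                if_pos ((hfix i (Finset.mem_sdiff.1 hi).2).symm),
              Finset.sum_const, Finset.card_sdiff_of_subset (Finset.subset_univ S),
              Finset.card_univ, Fintype.card_fin, hScard, hLlen]
        calc c k + (n - k) • t
            = (∑ i ∈ S, A i (π i)) + ∑ i ∈ Finset.univ \ S, (if i = π i then t else ⊥) :=
              hterm.symm
          _ ≤ (Finset.univ : Finset (Fin n)).powerset.sup fun S =>
                (∑ i ∈ S, A i (π i)) + ∑ i ∈ Finset.univ \ S, (if i = π i then t else ⊥) :=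
              Finset.le_sup (f := fun S => (∑ i ∈ S, A i (π i)) +
                ∑ i ∈ Finset.univ \ S, (if i = π i then t else ⊥))
                (Finset.mem_powerset.2 (Finset.subset_univ S))
          _ ≤ _ := Finset.le_sup (f := fun π : Equiv.Perm (Fin n) =>
                (Finset.univ : Finset (Fin n)).powerset.sup fun S =>
                  (∑ i ∈ S, A i (π i)) + ∑ i ∈ Finset.univ \ S, (if i = π i then t else ⊥))
              (Finset.mem_univ π)
end

section
/- Let A ∈ ℝ_max^{n×n}, let λ_1 > ⋯ > λ_p be the finite roots of χ_A(t), and let 𝔊_0, 𝔊_1, …, 𝔊_p be an MMCS of A. For each k = 1,…,p, if a circuit 𝒞 of 𝒢(A) has a common node with 𝔊_k, then 𝒞 intersects some circuit 𝒞′ belonging to one of 𝔊_1, 𝔊_2, …, 𝔊_k such that the mean weight of 𝒞′ is at least the mean weight of 𝒞. -/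
open BigOperators

namespace MMCSProof

open MaxPlus Finset

noncomputable section

variable {n : ℕ}

/-- Real weight of a walk. -/
def rweight (A : Matrix (Fin n) (Fin n) Rmax) (t : ℕ) (p : ℕ → Fin n) : ℝ :=
  ∑ k ∈ Finset.range t, (A (p k) (p (k + 1))).unbotD 0

/-- Real weight of a multi-circuit. -/
def rmcWeight (A : Matrix (Fin n) (Fin n) Rmax) (L : List (ℕ × (ℕ → Fin n))) : ℝ :=
  (L.map fun c => rweight A c.1 c.2).sum

lemma coe_sum {ι : Type*} (s : Finset ι) (f : ι → ℝ) :
    ((∑ i ∈ s, f i : ℝ) : Rmax) = ∑ i ∈ s, ((f i : ℝ) : Rmax) := by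
  induction s using Finset.cons_induction with
  | empty => simp
  | cons a s ha ih => rw [Finset.sum_cons, Finset.sum_cons, WithBot.coe_add, ih]

lemma weight_eq_coe {A : Matrix (Fin n) (Fin n) Rmax} {t : ℕ} {p : ℕ → Fin n}
    (h : IsWalk A t p) : weight A t p = ((rweight A t p : ℝ) : Rmax) := by
  rw [rweight, coe_sum, weight]
  refine Finset.sum_congr rfl fun k hk => ?_
  have hb := h k (Finset.mem_range.mp hk)
  lift A (p k) (p (k + 1)) to ℝ using hb with x hx
  simp

lemma mean_eq {A : Matrix (Fin n) (Fin n) Rmax} {t : ℕ} {p : ℕ → Fin n}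
    (h : IsWalk A t p) : mean A t p = rweight A t p / t := by
  rw [mean, weight_eq_coe h, WithBot.unbotD_coe]

lemma mcWeight_eq_coe {A : Matrix (Fin n) (Fin n) Rmax} {L : List (ℕ × (ℕ → Fin n))}
    (h : ∀ c ∈ L, IsWalk A c.1 c.2) :
    mcWeight A L = ((rmcWeight A L : ℝ) : Rmax) := by
  induction L with
  | nil => simp [mcWeight, rmcWeight]
  | cons c L ih =>
    have h2 := ih (fun d hd => h d (List.mem_cons_of_mem c hd))
    have h3 := weight_eq_coe (h c (List.mem_cons_self))
    simp only [mcWeight, rmcWeight, List.map_cons, List.sum_cons] at h2 h3 ⊢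
    rw [h3, h2, WithBot.coe_add]

lemma mcVal_eq_coe {A : Matrix (Fin n) (Fin n) Rmax} {lam : ℝ} {L : List (ℕ × (ℕ → Fin n))}
    (h : ∀ c ∈ L, IsWalk A c.1 c.2) :
    mcVal A lam L
      = (((rmcWeight A L + ((n : ℝ) - (mcLength L : ℝ)) * lam : ℝ)) : Rmax) := by
  rw [mcVal, mcWeight_eq_coe h, ← WithBot.coe_add]

lemma mod_succ_inj {t l m : ℕ} (ht : 0 < t) (hl : l < t) (hm : m < t)
    (h : (l + 1) % t = (m + 1) % t) : l = m := by
  rcases Nat.lt_or_ge (l + 1) t with h1 | h1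
  · rw [Nat.mod_eq_of_lt h1] at h
    rcases Nat.lt_or_ge (m + 1) t with h2 | h2
    · rw [Nat.mod_eq_of_lt h2] at h; omega
    · have hmt : m + 1 = t := by omega
      rw [hmt, Nat.mod_self] at h; omega
  · have hlt : l + 1 = t := by omega
    rw [hlt, Nat.mod_self] at h
    rcases Nat.lt_or_ge (m + 1) t with h2 | h2
    · rw [Nat.mod_eq_of_lt h2] at h; omega
    · omega

/-- **Key lemma A**: `χ_A(λ) ≥ w(L) + λ (n - ℓ(L))` for every multi-circuit `L`. -/
lemma charPoly_ge_mcVal (A : Matrix (Fin n) (Fin n) Rmax) (lam : ℝ)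
    (L : List (ℕ × (ℕ → Fin n))) (hL : IsMultiCircuit A L) :
    mcVal A lam L ≤ charPoly A ((lam : ℝ) : Rmax) := by
  classical
  obtain ⟨hmem, hpair⟩ := hL
  set R : (ℕ × (ℕ → Fin n)) → (ℕ × (ℕ → Fin n)) → Prop :=
    fun c d => ∀ k, k < c.1 → ∀ l, l < d.1 → c.2 k ≠ d.2 l with hR
  have hsymm : Symmetric R := fun c d h k hk l hl he => h l hl k hk he.symm
  have hkey : ∀ c ∈ L, ∀ d ∈ L, ∀ k, k < c.1 → ∀ l, l < d.1 → c.2 k = d.2 l →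
      c = d ∧ k = l := by
    intro c hc d hd k hk l hl he
    by_cases hcd : c = d
    · subst hcd; exact ⟨rfl, (hmem c hc).2 k hk l hl he⟩
    · haveI : Std.Symm R := ⟨fun _ _ h => hsymm h⟩; exact absurd he (hpair.forall hc hd hcd k hk l hl)
  set covered : Fin n → Prop := fun i => ∃ c ∈ L, ∃ l, l < c.1 ∧ c.2 l = i with hcovered
  have hex : ∀ i, ∃ j : Fin n,
      (∀ c ∈ L, ∀ l, l < c.1 → c.2 l = i → j = c.2 ((l + 1) % c.1)) ∧
      (¬ covered i → j = i) := by
    intro i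
    by_cases h : covered i
    · obtain ⟨c, hc, l, hl, he⟩ := h
      refine ⟨c.2 ((l + 1) % c.1), ?_, fun hn => absurd ⟨c, hc, l, hl, he⟩ hn⟩
      intro d hd m hm he'
      obtain ⟨rfl, rfl⟩ := hkey d hd c hc m hm l hl (he'.trans he.symm)
      rfl
    · exact ⟨i, fun c hc l hl he => absurd ⟨c, hc, l, hl, he⟩ h, fun _ => rfl⟩
  set f : Fin n → Fin n := fun i => (hex i).choose with hf
  have hf1 : ∀ c ∈ L, ∀ l, l < c.1 → f (c.2 l) = c.2 ((l + 1) % c.1) :=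
    fun c hc l hl => (hex (c.2 l)).choose_spec.1 c hc l hl rfl
  have hf2 : ∀ i, ¬ covered i → f i = i := fun i h => (hex i).choose_spec.2 h
  have hcovf : ∀ i, covered i → covered (f i) := by
    rintro i ⟨c, hc, l, hl, rfl⟩
    exact ⟨c, hc, (l + 1) % c.1, Nat.mod_lt _ (hmem c hc).1.1, (hf1 c hc l hl).symm⟩
  have hinj : Function.Injective f := by
    intro i j hij
    by_cases hi : covered i <;> by_cases hj : covered j
    · obtain ⟨c, hc, l, hl, hei⟩ := hi
      obtain ⟨d, hd, m, hm, hej⟩ := hj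
      have h0c : 0 < c.1 := (hmem c hc).1.1
      have h0d : 0 < d.1 := (hmem d hd).1.1
      have h1 : f i = c.2 ((l + 1) % c.1) := by rw [← hei]; exact hf1 c hc l hl
      have h2 : f j = d.2 ((m + 1) % d.1) := by rw [← hej]; exact hf1 d hd m hm
      obtain ⟨hcd, hlm⟩ := hkey c hc d hd _ (Nat.mod_lt _ h0c) _ (Nat.mod_lt _ h0d)
        (by rw [← h1, ← h2, hij])
      subst hcd
      have hlm2 : l = m := mod_succ_inj h0c hl hm hlm
      rw [← hei, ← hej, hlm2]
    · exact absurd (by rw [← hf2 j hj, ← hij]; exact hcovf i hi) hj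
    · exact absurd (by rw [← hf2 i hi, hij]; exact hcovf j hj) hi
    · rw [hf2 i hi, hf2 j hj] at hij; exact hij
  set π : Equiv.Perm (Fin n) := Equiv.ofBijective f (Finite.injective_iff_bijective.mp hinj)
    with hπ
  set B : Matrix (Fin n) (Fin n) Rmax :=
    fun i j => A i j ⊔ (if i = j then ((lam : ℝ) : Rmax) else ⊥) with hB
  -- union of nodes
  set UN : List (ℕ × (ℕ → Fin n)) → Finset (Fin n) :=
    fun M => M.foldr (fun c acc => circNodes c.1 c.2 ∪ acc) ∅ with hUN
  have hUNmem : ∀ M (i : Fin n), i ∈ UN M ↔ ∃ c ∈ M, ∃ l, l < c.1 ∧ c.2 l = i := by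
    intro M
    induction M with
    | nil => simp [hUN]
    | cons c M ih =>
      intro i
      show i ∈ circNodes c.1 c.2 ∪ UN M ↔ _
      rw [Finset.mem_union, ih i]
      constructor
      · rintro (h | ⟨d, hd, l, hl, he⟩)
        · obtain ⟨l, hl, he⟩ := Finset.mem_image.mp h
          exact ⟨c, List.mem_cons_self, l, Finset.mem_range.mp hl, he⟩
        · exact ⟨d, List.mem_cons_of_mem c hd, l, hl, he⟩
      · rintro ⟨d, hd, l, hl, he⟩
        rcases List.mem_cons.mp hd with rfl | hd
        · exact Or.inl (Finset.mem_image.mpr ⟨l, Finset.mem_range.mpr hl, he⟩)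
        · exact Or.inr ⟨d, hd, l, hl, he⟩
  have hmain : ∀ M : List (ℕ × (ℕ → Fin n)), (∀ c ∈ M, c ∈ L) → M.Pairwise R →
      (UN M).card = mcLength M ∧ mcWeight A M ≤ ∑ i ∈ UN M, B i (f i) := by
    intro M
    induction M with
    | nil => intro _ _; simp [hUN, mcWeight, mcLength]
    | cons c M ih =>
      intro hsub hp
      obtain ⟨hcard, hle⟩ := ih (fun d hd => hsub d (List.mem_cons_of_mem c hd)) hp.of_cons
      have hcL : c ∈ L := hsub c List.mem_cons_self
      have h0 : 0 < c.1 := (hmem c hcL).1.1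
      have hinjc : ∀ x ∈ Finset.range c.1, ∀ y ∈ Finset.range c.1, c.2 x = c.2 y → x = y :=
        fun x hx y hy he =>
          (hmem c hcL).2 x (Finset.mem_range.mp hx) y (Finset.mem_range.mp hy) he
      have hdisj : Disjoint (circNodes c.1 c.2) (UN M) := by
        rw [Finset.disjoint_left]
        intro a ha hb
        obtain ⟨l, hl, he⟩ := Finset.mem_image.mp ha
        obtain ⟨d, hd, m, hm, he2⟩ := (hUNmem M a).mp hb
        exact (List.pairwise_cons.mp hp).1 d hd l (Finset.mem_range.mp hl) m hm
          (by rw [he, ← he2])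
      have hUNcons : UN (c :: M) = circNodes c.1 c.2 ∪ UN M := rfl
      constructor
      · rw [hUNcons, Finset.card_union_of_disjoint hdisj, hcard]
        have : (circNodes c.1 c.2).card = c.1 := by
          rw [circNodes, Finset.card_image_of_injOn
            (fun x hx y hy he => hinjc x hx y hy he), Finset.card_range]
        rw [this]; rfl
      · have hwc : mcWeight A (c :: M) = weight A c.1 c.2 + mcWeight A M := by
          simp [mcWeight]
        rw [hUNcons, hwc, Finset.sum_union hdisj]
        refine add_le_add ?_ hle
        rw [circNodes, Finset.sum_image hinjc, weight]
        refine Finset.sum_le_sum fun l hl => ?_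
        have hlt := Finset.mem_range.mp hl
        have hfl : f (c.2 l) = c.2 ((l + 1) % c.1) := hf1 c hcL l hlt
        have hnode : c.2 ((l + 1) % c.1) = c.2 (l + 1) := by
          rcases Nat.lt_or_ge (l + 1) c.1 with h1 | h1
          · rw [Nat.mod_eq_of_lt h1]
          · have : l + 1 = c.1 := by omega
            rw [this, Nat.mod_self, ← (hmem c hcL).1.2.2]
        rw [hfl, hnode]
        exact le_sup_left
  obtain ⟨hcard, hle⟩ := hmain L (fun _ h => h) hpair
  have hlen_le : mcLength L ≤ n := by
    rw [← hcard]
    simpa using Finset.card_le_univ (UN L)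
  have hcompl : ((((n : ℝ) - (mcLength L : ℝ)) * lam : ℝ) : Rmax)
      ≤ ∑ i ∈ (UN L)ᶜ, B i (f i) := by
    have h1 : ∀ i ∈ (UN L)ᶜ, ((lam : ℝ) : Rmax) ≤ B i (f i) := by
      intro i hi
      have hnc : ¬ covered i := by
        rw [Finset.mem_compl, hUNmem] at hi
        exact hi
      rw [hf2 i hnc, hB]
      simp only [if_pos rfl]
      exact le_sup_right
    calc ((((n : ℝ) - (mcLength L : ℝ)) * lam : ℝ) : Rmax)
        = (UN L)ᶜ.card • ((lam : ℝ) : Rmax) := by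
          rw [← WithBot.coe_nsmul]
          congr 1
          rw [nsmul_eq_mul]
          congr 1
          rw [Finset.card_compl, hcard, Fintype.card_fin]
          push_cast [Nat.cast_sub hlen_le]
          ring
      _ = ∑ _i ∈ (UN L)ᶜ, ((lam : ℝ) : Rmax) := (Finset.sum_const _).symm
      _ ≤ ∑ i ∈ (UN L)ᶜ, B i (f i) := Finset.sum_le_sum h1
  have hsum : mcVal A lam L ≤ ∑ i, B i (π i) := by
    have : ∑ i, B i (π i) = ∑ i ∈ UN L, B i (f i) + ∑ i ∈ (UN L)ᶜ, B i (f i) := by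
      rw [Finset.sum_add_sum_compl]
      exact Finset.sum_congr rfl fun i _ => by rw [hπ, Equiv.ofBijective_apply]
    rw [this, mcVal]
    exact add_le_add hle hcompl
  refine hsum.trans ?_
  exact Finset.le_sup (f := fun π : Equiv.Perm (Fin n) => ∑ i, B i (π i)) (Finset.mem_univ π)

/-- **Lemma C**: every circuit of a `λ`-MMC has mean weight at least `λ`. -/
lemma lam_le_mean_of_mem_MMC {A : Matrix (Fin n) (Fin n) Rmax} {lam : ℝ}
    {L : List (ℕ × (ℕ → Fin n))} (h : IsMMC A lam L) {c : ℕ × (ℕ → Fin n)} (hc : c ∈ L) :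
    lam ≤ mean A c.1 c.2 := by
  classical
  obtain ⟨hLm, hval⟩ := h
  obtain ⟨L', hperm⟩ : ∃ L', L.Perm (c :: L') := ⟨_, List.perm_cons_erase hc⟩
  have hsymm : Symmetric (fun c d : ℕ × (ℕ → Fin n) =>
      ∀ k, k < c.1 → ∀ l, l < d.1 → c.2 k ≠ d.2 l) :=
    fun c d h k hk l hl he => h l hl k hk he.symm
  have hmemL' : ∀ d ∈ L', d ∈ L :=
    fun d hd => hperm.mem_iff.mpr (List.mem_cons_of_mem c hd)
  have hL' : IsMultiCircuit A L' :=
    ⟨fun d hd => hLm.1 d (hmemL' d hd), ((hperm.pairwise_iff (fun {x y} h k hk l hl he => h l hl k hk he.symm)).mp hLm.2).of_cons⟩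
  have hwalks : ∀ d ∈ L, IsWalk A d.1 d.2 := fun d hd => (hLm.1 d hd).1.2.1
  have hwalks' : ∀ d ∈ L', IsWalk A d.1 d.2 := fun d hd => hwalks d (hmemL' d hd)
  have h0c : 0 < c.1 := (hLm.1 c hc).1.1
  have hW : rmcWeight A L = rweight A c.1 c.2 + rmcWeight A L' := by
    rw [rmcWeight, (hperm.map _).sum_eq, List.map_cons, List.sum_cons]; rfl
  have hlen : mcLength L = c.1 + mcLength L' := by
    rw [mcLength, (hperm.map _).sum_eq, List.map_cons, List.sum_cons]; rfl
  have h1 : mcVal A lam L' ≤ charPoly A ((lam : ℝ) : Rmax) := charPoly_ge_mcVal A lam L' hL'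
  rw [hval, mcVal_eq_coe hwalks, mcVal_eq_coe hwalks', WithBot.coe_le_coe] at h1
  have hfin : lam * c.1 ≤ rweight A c.1 c.2 := by
    rw [hW, hlen] at h1
    push_cast at h1
    nlinarith [h1]
  rw [mean_eq ((hLm.1 c hc).1.2.1), le_div_iff₀ (by exact_mod_cast h0c)]
  linarith

/-- **Lemma B**: every circuit contains an elementary circuit on its nodes with
at least its mean weight. -/
lemma exists_elem_subcircuit (A : Matrix (Fin n) (Fin n) Rmax) :
    ∀ t : ℕ, ∀ q : ℕ → Fin n, IsCircuit A t q →
    ∃ t' q', IsElemCircuit A t' q' ∧ (∀ l, l < t' → ∃ m, m < t ∧ q m = q' l) ∧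
      mean A t q ≤ mean A t' q' := by
  intro t
  induction t using Nat.strong_induction_on with
  | _ t IH =>
  intro q hq
  by_cases hel : ∀ k, k < t → ∀ l, l < t → q k = q l → k = l
  · exact ⟨t, q, ⟨hq, hel⟩, fun l hl => ⟨l, hl, rfl⟩, le_refl _⟩
  push_neg at hel
  obtain ⟨k, hk, l, hl, he, hne⟩ := hel
  wlog hkl : k < l generalizing k l
  · exact this l hl k hk he.symm (Ne.symm hne) (by omega)
  obtain ⟨ht0, hw, hcl⟩ := hq
  set t1 := l - k with ht1def
  set q1 : ℕ → Fin n := fun j => q (k + j) with hq1def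
  set t2 := t - (l - k) with ht2def
  set q2 : ℕ → Fin n := fun j => if j ≤ k then q j else q (j + (l - k)) with hq2def
  have ht1pos : 0 < t1 := by omega
  have ht2pos : 0 < t2 := by omega
  have ht2k : k < t2 := by omega
  have hc1 : IsCircuit A t1 q1 := by
    refine ⟨ht1pos, fun j hj => ?_, ?_⟩
    · exact hw (k + j) (by omega)
    · show q1 t1 = q1 0
      simp only [hq1def]
      rw [show k + t1 = l by omega, Nat.add_zero, ← he]
  have hc2 : IsCircuit A t2 q2 := by
    refine ⟨ht2pos, fun j hj => ?_, ?_⟩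
    · rcases Nat.lt_trichotomy j k with hjk | rfl | hjk
      · show A (q2 j) (q2 (j + 1)) ≠ ⊥
        rw [hq2def]
        simp only [if_pos (by omega : j ≤ k), if_pos (by omega : j + 1 ≤ k)]
        exact hw j (by omega)
      · show A (q2 j) (q2 (j + 1)) ≠ ⊥
        rw [hq2def]
        simp only [if_pos (le_refl j), if_neg (by omega : ¬ j + 1 ≤ j)]
        rw [show j + 1 + (l - j) = l + 1 by omega, he]
        exact hw l (by omega)
      · show A (q2 j) (q2 (j + 1)) ≠ ⊥
        rw [hq2def]
        simp only [if_neg (by omega : ¬ j ≤ k), if_neg (by omega : ¬ j + 1 ≤ k)]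
        rw [show j + 1 + (l - k) = (j + (l - k)) + 1 by omega]
        exact hw (j + (l - k)) (by omega)
    · show q2 t2 = q2 0
      rw [hq2def]
      simp only [if_neg (by omega : ¬ t2 ≤ k), if_pos (by omega : 0 ≤ k)]
      rw [show t2 + (l - k) = t by omega, hcl]
  -- weight split
  set a : ℕ → ℝ := fun m => (A (q m) (q (m + 1))).unbotD 0 with hadef
  have hw1 : rweight A t1 q1 = ∑ m ∈ Finset.Ico k l, a m := by
    rw [rweight, Finset.sum_Ico_eq_sum_range]
    refine Finset.sum_congr (by rw [ht1def]) fun j hj => ?_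
    rfl
  have hw2 : rweight A t2 q2
      = (∑ m ∈ Finset.range k, a m) + a l + ∑ m ∈ Finset.Ico (l + 1) t, a m := by
    rw [rweight]
    rw [show t2 = (k + 1) + (t2 - (k + 1)) by omega, Finset.sum_range_add,
      Finset.sum_range_succ]
    congr 1
    · congr 1
      · refine Finset.sum_congr rfl fun j hj => ?_
        have hjk := Finset.mem_range.mp hj
        rw [hq2def]
        simp only [if_pos (by omega : j ≤ k), if_pos (by omega : j + 1 ≤ k)]
        rfl
      · rw [hq2def]
        simp only [if_pos (le_refl k), if_neg (by omega : ¬ k + 1 ≤ k)]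
        rw [show k + 1 + (l - k) = l + 1 by omega, he]
    · rw [Finset.sum_Ico_eq_sum_range, show t - (l + 1) = t2 - (k + 1) by omega]
      refine Finset.sum_congr rfl fun j hj => ?_
      have hjb := Finset.mem_range.mp hj
      rw [hq2def]
      simp only [if_neg (by omega : ¬ k + 1 + j ≤ k), if_neg (by omega : ¬ k + 1 + j + 1 ≤ k)]
      rw [show k + 1 + j + (l - k) = l + 1 + j by omega,
        show k + 1 + j + 1 + (l - k) = l + 1 + j + 1 by omega]
  have hsplit : rweight A t q = rweight A t1 q1 + rweight A t2 q2 := by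
    rw [hw1, hw2, rweight]
    have e1 : ∑ m ∈ Finset.range t, a m
        = (∑ m ∈ Finset.range k, a m) + (∑ m ∈ Finset.Ico k l, a m)
          + ∑ m ∈ Finset.Ico l t, a m := by
      rw [Finset.range_eq_Ico, ← Finset.sum_Ico_consecutive a (by omega : 0 ≤ l) (by omega : l ≤ t),
        ← Finset.sum_Ico_consecutive a (by omega : 0 ≤ k) (by omega : k ≤ l),
        ← Finset.range_eq_Ico]
    have e2 : ∑ m ∈ Finset.Ico l t, a m = a l + ∑ m ∈ Finset.Ico (l + 1) t, a m :=
      Finset.sum_eq_sum_Ico_succ_bot (by omega) a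
    rw [e1, e2]; ring
  -- mean comparison
  have hwalk : IsWalk A t q := hw
  have hmeansplit : mean A t q ≤ mean A t1 q1 ∨ mean A t q ≤ mean A t2 q2 := by
    by_contra hcon
    push_neg at hcon
    obtain ⟨h1, h2⟩ := hcon
    rw [mean_eq hwalk] at h1 h2
    rw [mean_eq hc1.2.1] at h1
    rw [mean_eq hc2.2.1] at h2
    set M := rweight A t q / t with hM
    have e1 : rweight A t1 q1 < M * t1 := by
      rw [div_lt_iff₀ (by exact_mod_cast ht1pos)] at h1
      linarith
    have e2 : rweight A t2 q2 < M * t2 := by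
      rw [div_lt_iff₀ (by exact_mod_cast ht2pos)] at h2
      linarith
    have hts : (t1 : ℝ) + t2 = t := by
      have : t1 + t2 = t := by omega
      exact_mod_cast this
    have e3 : M * t1 + M * t2 = rweight A t q := by
      rw [← mul_add, hts, hM, div_mul_cancel₀]
      exact_mod_cast ht0.ne'
    linarith [hsplit]
  rcases hmeansplit with hle | hle
  · obtain ⟨t', q', helem, hsubn, hle2⟩ := IH t1 (by omega) q1 hc1
    refine ⟨t', q', helem, fun li hli => ?_, hle.trans hle2⟩
    obtain ⟨m, hm, hqm⟩ := hsubn li hli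
    exact ⟨k + m, by omega, hqm⟩
  · obtain ⟨t', q', helem, hsubn, hle2⟩ := IH t2 (by omega) q2 hc2
    refine ⟨t', q', helem, fun li hli => ?_, hle.trans hle2⟩
    obtain ⟨m, hm, hqm⟩ := hsubn li hli
    by_cases hmk : m ≤ k
    · refine ⟨m, by omega, ?_⟩
      rw [← hqm, hq2def]; simp only [if_pos hmk]
    · refine ⟨m + (l - k), by omega, ?_⟩
      rw [← hqm, hq2def]; simp only [if_neg hmk]

lemma lam_antitone {rs : Fin n → Rmax} {p : ℕ} {lam : ℕ → ℝ}
    (hfr : IsFiniteRootSeq rs p lam) :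
    ∀ a b, 1 ≤ a → a ≤ b → b ≤ p → lam b ≤ lam a := by
  intro a b ha hab hbp
  induction b with
  | zero => omega
  | succ b ih =>
    rcases Nat.lt_or_ge a (b + 1) with h | h
    · have h1 := hfr.1 b (by omega) (by omega)
      have h2 := ih (by omega) (by omega)
      linarith
    · have : a = b + 1 := by omega
      rw [this]

lemma list_len_cast (l : List (ℕ × (ℕ → Fin n))) :
    ((mcLength l : ℕ) : ℝ) = (l.map fun c => ((c.1 : ℕ) : ℝ)).sum := by
  rw [mcLength, Nat.cast_list_sum, List.map_map]; rfl

end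

end MMCSProof

open MaxPlus in
/-- **Lemma 3.** Let `λ_1 > ⋯ > λ_p` be the finite roots of `χ_A` and
`𝔊_0, …, 𝔊_p` an MMCS of `A`.  For each `k = 1, …, p`, if a circuit `𝒞` of `𝒢(A)`
has a common node with `𝔊_k`, then `𝒞` intersects some circuit `𝒞′` belonging to one
of `𝔊_1, …, 𝔊_k` with mean weight at least that of `𝒞`. -/
theorem circuit_meets_mmcs_circuit_of_larger_mean {n : ℕ}
    (A : Matrix (Fin n) (Fin n) Rmax)
    (rs : Fin n → Rmax) (hroots : IsCharRoots A rs)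
    (p : ℕ) (lam : ℕ → ℝ) (hfr : IsFiniteRootSeq rs p lam)
    (G : ℕ → List (ℕ × (ℕ → Fin n))) (hG : IsMMCS A p lam G)
    (k : ℕ) (hk1 : 1 ≤ k) (hkp : k ≤ p)
    (t : ℕ) (q : ℕ → Fin n) (hq : IsCircuit A t q)
    (hcommon : ∃ m, m < t ∧ ∃ c ∈ G k, ∃ l, l < c.1 ∧ q m = c.2 l) :
    ∃ k', 1 ≤ k' ∧ k' ≤ k ∧ ∃ c ∈ G k',
      (∃ m, m < t ∧ ∃ l, l < c.1 ∧ q m = c.2 l) ∧ mean A t q ≤ mean A c.1 c.2 := by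
  classical
  by_cases hcase : mean A t q ≤ lam k
  · obtain ⟨m, hm, c, hcG, lidx, hlidx, heq⟩ := hcommon
    refine ⟨k, hk1, le_refl k, c, hcG, ⟨m, hm, lidx, hlidx, heq⟩, ?_⟩
    have hmmc : IsMMC A (lam k) (G k) :=
      hG.2 k hkp (lam k) (fun hkp' => le_of_lt (hfr.1 k hk1 hkp')) (fun _ => le_refl _)
    exact hcase.trans (MMCSProof.lam_le_mean_of_mem_MMC hmmc hcG)
  · push_neg at hcase
    by_contra hcon
    push_neg at hcon
    have hexj : ∃ m, 1 ≤ m ∧ lam m < mean A t q := ⟨k, hk1, hcase⟩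
    set j := Nat.find hexj with hjdef
    obtain ⟨hj1, hjμ⟩ := Nat.find_spec hexj
    have hjk : j ≤ k := Nat.find_le ⟨hk1, hcase⟩
    have hjmin : ∀ m, 1 ≤ m → m < j → mean A t q ≤ lam m := by
      intro m h1 h2
      by_contra hc2
      push_neg at hc2
      exact Nat.find_min hexj (by omega : m < Nat.find hexj) ⟨h1, hc2⟩
    obtain ⟨t0, q0, helem0, hsub0, hmean0⟩ := MMCSProof.exists_elem_subcircuit A t q hq
    have h0t0 : 0 < t0 := helem0.1.1
    set l0 := G (j - 1) with hl0
    have hinter : ∀ c ∈ l0, (∃ m, m < t ∧ ∃ li, li < c.1 ∧ q m = c.2 li) →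
        mean A c.1 c.2 < mean A t q := by
      intro c hc hic
      by_cases hj2 : 1 ≤ j - 1
      · exact hcon (j - 1) hj2 (by omega) c hc hic
      · rw [hl0, show j - 1 = 0 by omega, hG.1] at hc
        cases hc
    set T : Finset ℝ := insert (lam j) (l0.map fun c => mean A c.1 c.2).toFinset with hT
    set T' := T.filter (· < mean A t q) with hT'
    have hmemT' : lam j ∈ T' := Finset.mem_filter.mpr ⟨Finset.mem_insert_self _ _, hjμ⟩
    have hT'ne : T'.Nonempty := ⟨_, hmemT'⟩
    set lm0 := T'.max' hT'ne with hlm0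
    have hlm0μ : lm0 < mean A t q := by
      have := Finset.mem_filter.mp (T'.max'_mem hT'ne)
      exact this.2
    set x := (lm0 + mean A t q) / 2 with hx
    have hxlt : x < mean A t q := by rw [hx]; linarith
    have hlm0x : lm0 < x := by rw [hx]; linarith
    have hjx : lam j ≤ x := le_of_lt (lt_of_le_of_lt (Finset.le_max' T' _ hmemT') hlm0x)
    have hmmc : IsMMC A x l0 := by
      refine hG.2 (j - 1) (by omega) x (fun _ => ?_) (fun hj2 => ?_)
      · rw [show j - 1 + 1 = j by omega]; exact hjx
      · exact le_of_lt (lt_of_lt_of_le hxlt (hjmin (j - 1) hj2 (by omega)))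
    set pI : (ℕ × (ℕ → Fin n)) → Prop :=
      fun c => ∃ m, m < t ∧ ∃ li, li < c.1 ∧ q m = c.2 li with hpI
    set lD := l0.filter (fun c => decide (pI c)) with hlD
    set l1 := l0.filter (fun c => ! decide (pI c)) with hl1
    have hpermf : (lD ++ l1).Perm l0 := List.filter_append_perm _ l0
    have hmeml1 : ∀ c ∈ l1, c ∈ l0 ∧ ¬ pI c := by
      intro c hc
      have := List.mem_filter.mp hc
      refine ⟨this.1, by simpa using this.2⟩
    have hmemlD : ∀ c ∈ lD, c ∈ l0 ∧ pI c := by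
      intro c hc
      have := List.mem_filter.mp hc
      exact ⟨this.1, by simpa using this.2⟩
    set L' := (t0, q0) :: l1 with hL'
    have hmc0 := hmmc.1
    have hL'mc : IsMultiCircuit A L' := by
      constructor
      · intro c hc
        rcases List.mem_cons.mp hc with rfl | hc
        · exact helem0
        · exact hmc0.1 c (hmeml1 c hc).1
      · rw [hL', List.pairwise_cons]
        refine ⟨?_, hmc0.2.sublist List.filter_sublist⟩
        intro d hd kk hkk li hli heq
        obtain ⟨m, hm, hqm⟩ := hsub0 kk hkk
        exact (hmeml1 d hd).2 ⟨m, hm, li, hli, by rw [hqm]; exact heq⟩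
    have hub := MMCSProof.charPoly_ge_mcVal A x L' hL'mc
    rw [hmmc.2] at hub
    have hwalks0 : ∀ c ∈ l0, IsWalk A c.1 c.2 := fun c hc => (hmc0.1 c hc).1.2.1
    have hwalksL' : ∀ c ∈ L', IsWalk A c.1 c.2 := fun c hc => (hL'mc.1 c hc).1.2.1
    rw [MMCSProof.mcVal_eq_coe hwalksL', MMCSProof.mcVal_eq_coe hwalks0,
      WithBot.coe_le_coe] at hub
    have hWsplit : MMCSProof.rmcWeight A l0
        = MMCSProof.rmcWeight A lD + MMCSProof.rmcWeight A l1 := by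
      rw [MMCSProof.rmcWeight, ← (hpermf.map _).sum_eq, List.map_append, List.sum_append]
      rfl
    have hLsplit : mcLength l0 = mcLength lD + mcLength l1 := by
      rw [mcLength, ← (hpermf.map _).sum_eq, List.map_append, List.sum_append]
      rfl
    have hWL' : MMCSProof.rmcWeight A L'
        = MMCSProof.rweight A t0 q0 + MMCSProof.rmcWeight A l1 := by
      rw [hL', MMCSProof.rmcWeight, List.map_cons, List.sum_cons]
      rfl
    have hLL' : mcLength L' = t0 + mcLength l1 := by
      rw [hL', mcLength, List.map_cons, List.sum_cons]
      rfl
    have hDle : MMCSProof.rmcWeight A lD ≤ x * (mcLength lD : ℝ) := by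
      have hpt : ∀ c ∈ lD, MMCSProof.rweight A c.1 c.2 ≤ x * (c.1 : ℝ) := by
        intro c hc
        obtain ⟨hcl0, hpc⟩ := hmemlD c hc
        have h0c : 0 < c.1 := (hmc0.1 c hcl0).1.1
        have hmc : mean A c.1 c.2 < mean A t q := hinter c hcl0 hpc
        have hmT : mean A c.1 c.2 ∈ T :=
          Finset.mem_insert_of_mem (List.mem_toFinset.mpr (List.mem_map_of_mem hcl0))
        have hmT' : mean A c.1 c.2 ∈ T' := Finset.mem_filter.mpr ⟨hmT, by simpa using hmc⟩
        have hle0 : mean A c.1 c.2 ≤ lm0 := Finset.le_max' _ _ hmT'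
        rw [MMCSProof.mean_eq (hwalks0 c hcl0),
          div_le_iff₀ (by exact_mod_cast h0c : (0:ℝ) < (c.1:ℝ))] at hle0
        have hcpos : (0:ℝ) ≤ (c.1 : ℝ) := by positivity
        nlinarith
      calc MMCSProof.rmcWeight A lD
          ≤ (lD.map fun c => x * ((c.1:ℕ) : ℝ)).sum := List.sum_le_sum hpt
        _ = x * (mcLength lD : ℝ) := by
            rw [List.sum_map_mul_left, ← MMCSProof.list_len_cast]
    have hq0b : x * (t0 : ℝ) < MMCSProof.rweight A t0 q0 := by
      have hμ0 : mean A t q ≤ mean A t0 q0 := hmean0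
      rw [MMCSProof.mean_eq helem0.1.2.1] at hμ0
      have hxlt2 : x < MMCSProof.rweight A t0 q0 / t0 := lt_of_lt_of_le hxlt hμ0
      rw [lt_div_iff₀ (by exact_mod_cast h0t0 : (0:ℝ) < (t0:ℝ))] at hxlt2
      linarith
    rw [hWL', hWsplit, hLL', hLsplit] at hub
    push_cast at hub
    linarith
end
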